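/- arXiv:1304.3508 — 3 statements merged into one kernel-verified Lean document; each statement's English description precedes it below -/
import Mathlib

section
/- Every finitely generated ideal of the ring ℓ∞ of bounded complex sequences is a principal ideal, and is projective as an ℓ∞-module. -/
/-!
Divisibility in `ℓ∞` is pointwise domination: `x ∈ (g)` iff `‖x n‖ ≤ C ‖g n‖` for some `C`,
the cofactor being the bounded pointwise quotient `x / g`. Hence `(x₁, …, xₖ)` is generated by
`∑ |xⱼ|`, and on `(g)` division by `g` is a linear section of `r ↦ r g : ℓ∞ → (g)`, so `(g)` is
a direct summand of the free module `ℓ∞`.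
-/

/- `ℓ∞` is the ring of bounded sequences of complex numbers, with pointwise operations.
We realize it as `lp (fun _ : ℕ => ℂ) ⊤`. -/

noncomputable section
set_option synthInstance.maxHeartbeats 400000

abbrev ellInf := lp (fun _ : ℕ => ℂ) ⊤

namespace lp

variable {ι : Type*}

section NormedField

variable {𝕜 : Type*} [NormedField 𝕜]

theorem memℓp_infty_div_of_norm_le {x g : ι → 𝕜} {C : ℝ} (h : ∀ i, ‖x i‖ ≤ C * ‖g i‖) :
    Memℓp (fun i => x i / g i) ⊤ := by
  refine memℓp_infty ⟨max C 0, Set.forall_mem_range.2 fun i => ?_⟩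
  rcases eq_or_ne (g i) 0 with hg | hg
  · simp [hg]
  · rw [norm_div, div_le_iff₀ (norm_pos_iff.2 hg)]
    exact (h i).trans (by gcongr; exact le_max_left C 0)

theorem div_mul_cancel_of_norm_le {x g : ι → 𝕜} {C : ℝ} (h : ∀ i, ‖x i‖ ≤ C * ‖g i‖) (i : ι) :
    x i / g i * g i = x i := by
  rcases eq_or_ne (g i) 0 with hg | hg
  · have hx : x i = 0 := by simpa [hg] using h i
    simp [hg, hx]
  · exact div_mul_cancel₀ _ hg

theorem mem_span_singleton_iff_exists_norm_le {x g : lp (fun _ : ι => 𝕜) ⊤} :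
    x ∈ Ideal.span {g} ↔ ∃ C : ℝ, ∀ i, ‖x i‖ ≤ C * ‖g i‖ := by
  rw [Ideal.mem_span_singleton']
  constructor
  · rintro ⟨q, rfl⟩
    refine ⟨‖q‖, fun i => ?_⟩
    rw [infty_coeFn_mul, Pi.mul_apply, norm_mul]
    gcongr
    exact norm_apply_le_norm ENNReal.top_ne_zero q i
  · rintro ⟨C, hC⟩
    refine ⟨⟨_, memℓp_infty_div_of_norm_le hC⟩, ext <| funext fun i => ?_⟩
    rw [infty_coeFn_mul, Pi.mul_apply]
    exact div_mul_cancel_of_norm_le hC i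

def divBy (g : lp (fun _ : ι => 𝕜) ⊤) :
    Ideal.span {g} →ₗ[lp (fun _ : ι => 𝕜) ⊤] lp (fun _ : ι => 𝕜) ⊤ where
  toFun y := ⟨fun i => y.1 i / g i,
    memℓp_infty_div_of_norm_le (mem_span_singleton_iff_exists_norm_le.1 y.2).choose_spec⟩
  map_add' y z := ext <| funext fun i => add_div (y.1 i) (z.1 i) (g i)
  map_smul' r y := ext <| funext fun i => by
    simp only [Submodule.coe_smul, smul_eq_mul, infty_coeFn_mul, Pi.mul_apply, RingHom.id_apply]
    exact mul_div_assoc _ _ _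

theorem divBy_mul (g : lp (fun _ : ι => 𝕜) ⊤) (y : Ideal.span {g}) : divBy g y * g = y :=
  ext <| funext <|
    div_mul_cancel_of_norm_le (mem_span_singleton_iff_exists_norm_le.1 y.2).choose_spec

theorem projective_span_singleton (g : lp (fun _ : ι => 𝕜) ⊤) :
    Module.Projective (lp (fun _ : ι => 𝕜) ⊤) (Ideal.span {g}) :=
  .of_split (divBy g)
    ((LinearMap.toSpanSingleton _ _ g).codRestrict _
      fun r => Ideal.mul_mem_left _ r (Ideal.mem_span_singleton_self g))
    (LinearMap.ext fun y => Subtype.ext (divBy_mul g y))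

end NormedField

section RCLike

variable {𝕜 : Type*} [RCLike 𝕜]

def pointwiseNorm (x : lp (fun _ : ι => 𝕜) ⊤) : lp (fun _ : ι => 𝕜) ⊤ :=
  ⟨fun i => (‖x i‖ : 𝕜), (lp.memℓp x).norm.mono fun i => by simp⟩

theorem pointwiseNorm_mem_span_singleton (x : lp (fun _ : ι => 𝕜) ⊤) :
    pointwiseNorm x ∈ Ideal.span {x} :=
  mem_span_singleton_iff_exists_norm_le.2 ⟨1, fun i => by simp [pointwiseNorm]⟩

theorem span_eq_span_singleton_sum_pointwiseNorm (t : Finset (lp (fun _ : ι => 𝕜) ⊤)) :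
    Ideal.span t = Ideal.span {∑ x ∈ t, pointwiseNorm x} := by
  apply le_antisymm
  · refine Ideal.span_le.2 fun x hx => mem_span_singleton_iff_exists_norm_le.2 ⟨1, fun i => ?_⟩
    have hsum : (∑ y ∈ t, pointwiseNorm y) i = ((∑ y ∈ t, ‖y i‖ : ℝ) : 𝕜) := by
      rw [coeFn_sum, Finset.sum_apply, RCLike.ofReal_sum]
      rfl
    rw [hsum, RCLike.norm_ofReal, abs_of_nonneg (by positivity), one_mul]
    exact Finset.single_le_sum (fun y _ => norm_nonneg (y i)) hx
  · refine Ideal.span_le.2 (Set.singleton_subset_iff.2 (Ideal.sum_mem _ fun x hx => ?_))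
    exact Ideal.span_mono (Set.singleton_subset_iff.2 hx) (pointwiseNorm_mem_span_singleton x)

theorem isPrincipal_of_fg {I : Ideal (lp (fun _ : ι => 𝕜) ⊤)} (hI : I.FG) : I.IsPrincipal := by
  obtain ⟨t, rfl⟩ := hI
  exact ⟨_, span_eq_span_singleton_sum_pointwiseNorm t⟩

end RCLike

end lp

/-- Every finitely generated ideal of `ℓ∞` is principal and projective
as an `ℓ∞`-module. -/
theorem fg_ideal_ellInf_principal_and_projective (I : Ideal ellInf) (hI : I.FG) :
    Submodule.IsPrincipal I ∧ Module.Projective ellInf I := by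
  obtain ⟨g, rfl⟩ := (lp.isPrincipal_of_fg hI).principal
  exact ⟨⟨g, rfl⟩, lp.projective_span_singleton g⟩
end
end

section
/- Let α₀, α₁ ∈ ℓ∞ and let I be the ideal of ℓ∞ generated by {α₀, α₁}. Then the sequence μ defined by μ_n = max(|α₀(n)|, |α₁(n)|) belongs to I, and I is generated by μ; in particular I is principal. -/
noncomputable section
set_option synthInstance.maxHeartbeats 400000

def maxSeq (α₀ α₁ : ellInf) : ellInf :=
  ⟨fun n => ((max ‖α₀ n‖ ‖α₁ n‖ : ℝ) : ℂ), by
    refine memℓp_infty ?_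
    obtain ⟨C₀, hC₀⟩ := memℓp_infty_iff.1 α₀.property
    obtain ⟨C₁, hC₁⟩ := memℓp_infty_iff.1 α₁.property
    refine ⟨max C₀ C₁, ?_⟩
    rintro _ ⟨n, rfl⟩
    have h₀ : ‖α₀ n‖ ≤ C₀ := by
      simpa using hC₀ ⟨n, rfl⟩
    have h₁ : ‖α₁ n‖ ≤ C₁ := by
      simpa using hC₁ ⟨n, rfl⟩
    simp only [Complex.norm_real, Real.norm_eq_abs]
    rw [abs_of_nonneg (le_max_iff.2 (Or.inl (norm_nonneg _)))]
    exact max_le_max h₀ h₁ |>.trans_eq rfl⟩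

/-! In `ℓ∞` over a field, `m` divides `a` as soon as `‖a i‖ ≤ ‖m i‖` for all `i`: the quotient
`a / m` (with `0 / 0 = 0`) is bounded by one. So `α₀` and `α₁` are multiples of `μ`. Conversely,
picking `α₀ i` or `α₁ i` according to which has the larger norm gives an element of the ideal
whose pointwise norm is exactly `μ`, so `μ` is a multiple of it. -/

namespace lp

variable {ι 𝕜 : Type*} [NormedField 𝕜]

def ofNormLeOne (f : ι → 𝕜) (hf : ∀ i, ‖f i‖ ≤ 1) : lp (fun _ : ι => 𝕜) ⊤ :=
  ⟨f, memℓp_infty ⟨1, by rintro _ ⟨i, rfl⟩; exact hf i⟩⟩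

@[simp]
theorem coe_ofNormLeOne (f : ι → 𝕜) (hf : ∀ i, ‖f i‖ ≤ 1) : ⇑(ofNormLeOne f hf) = f := rfl

theorem infty_mem_span_singleton_of_norm_le {a m : lp (fun _ : ι => 𝕜) ⊤}
    (h : ∀ i, ‖a i‖ ≤ ‖m i‖) : a ∈ Ideal.span {m} := by
  have hquot : ∀ i, ‖a i / m i‖ ≤ 1 := fun i => by
    rw [norm_div]; exact div_le_one_of_le₀ (h i) (norm_nonneg _)
  refine Ideal.mem_span_singleton'.2 ⟨ofNormLeOne _ hquot, ext <| funext fun i => ?_⟩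
  rw [infty_coeFn_mul, Pi.mul_apply, coe_ofNormLeOne]
  rcases eq_or_ne (m i) 0 with hm | hm
  · simpa [hm, eq_comm] using h i
  · exact div_mul_cancel₀ _ hm

theorem exists_mem_span_pair_norm_eq_max (a b : lp (fun _ : ι => 𝕜) ⊤) :
    ∃ c ∈ Ideal.span {a, b}, ∀ i, ‖c i‖ = max ‖a i‖ ‖b i‖ := by
  classical
  let e := ofNormLeOne (fun i => if ‖b i‖ ≤ ‖a i‖ then (1 : 𝕜) else 0)
    fun i => by split_ifs <;> simp
  refine ⟨e * a + (1 - e) * b, Ideal.mem_span_pair.2 ⟨e, 1 - e, rfl⟩, fun i => ?_⟩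
  simp only [coeFn_add, infty_coeFn_mul, coeFn_sub, infty_coeFn_one, Pi.add_apply, Pi.mul_apply,
    Pi.sub_apply, Pi.one_apply, e, coe_ofNormLeOne]
  split_ifs with hab
  · simp [max_eq_left hab]
  · simp [max_eq_right (le_of_not_ge hab)]

end lp

theorem norm_maxSeq_apply (α₀ α₁ : ellInf) (n : ℕ) :
    ‖maxSeq α₀ α₁ n‖ = max ‖α₀ n‖ ‖α₁ n‖ := by
  simp [maxSeq]

/-- Let `α₀, α₁ ∈ ℓ∞` and let `I` be the ideal of `ℓ∞` generated by
`{α₀, α₁}`.  Then the sequence `μ` with `μ_n = max (|α₀ n|, |α₁ n|)` belongs to `I`, and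
`I` is generated by `μ`; in particular `I` is principal. -/
theorem maxSeq_mem_and_generates (α₀ α₁ : ellInf) :
    maxSeq α₀ α₁ ∈ Ideal.span {α₀, α₁} ∧
      Ideal.span {α₀, α₁} = Ideal.span {maxSeq α₀ α₁} := by
  obtain ⟨ν, hν, hνnorm⟩ := lp.exists_mem_span_pair_norm_eq_max α₀ α₁
  have hmem : maxSeq α₀ α₁ ∈ Ideal.span {α₀, α₁} :=
    Ideal.span_singleton_le_iff_mem _ |>.2 hν <|
      lp.infty_mem_span_singleton_of_norm_le fun n => by rw [norm_maxSeq_apply, hνnorm]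
  refine ⟨hmem, le_antisymm ?_ (Ideal.span_singleton_le_iff_mem _ |>.2 hmem)⟩
  rw [Ideal.span_le, Set.insert_subset_iff, Set.singleton_subset_iff]
  exact ⟨lp.infty_mem_span_singleton_of_norm_le fun n =>
      norm_maxSeq_apply α₀ α₁ n ▸ le_max_left _ _,
    lp.infty_mem_span_singleton_of_norm_le fun n =>
      norm_maxSeq_apply α₀ α₁ n ▸ le_max_right _ _⟩
end
end

section
/- Let 𝔄 be a unital complex Banach algebra. Then the ring ℓ^{∞−}(𝔄) = ∪_{q<∞} ℓ^q(𝔄) has the left triple factorization property: for every m ≥ 1 and every a¹, …, a^m ∈ ℓ^{∞−}(𝔄) there exist b¹, …, b^m, c, d ∈ ℓ^{∞−}(𝔄) such that a^i = c·d·b^i for all i and the right annihilators coincide: {v ∈ ℓ^{∞−}(𝔄) : d·v = 0} = {v ∈ ℓ^{∞−}(𝔄) : c·d·v = 0}. -/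
noncomputable section

variable (A : Type) [NormedRing A] [NormOneClass A] [NormedAlgebra ℂ A] [CompleteSpace A]

/-- Membership in `ℓ^{∞−}(𝔄) = ∪_{q<∞} ℓ^q(𝔄)`: a sequence `α : ℕ → 𝔄` lies in some
`ℓ^q(𝔄)`, i.e. `∑_n ‖α_n‖^q < ∞` for some `0 < q < ∞`. -/
def MemLinfMinus (α : ℕ → A) : Prop :=
  ∃ q : ℝ, 0 < q ∧ Summable fun n => ‖α n‖ ^ q

/-!
Finitely many sequences in `ℓ^{∞−}(𝔄)` lie in a common `ℓ^p`, so they are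
dominated by one strictly positive scalar sequence `s ∈ ℓ^p`. Put `c = d = s^{1/3}` and
`bⁱ = s^{-2/3} aⁱ`; then `c d bⁱ = aⁱ`, and `c`, `bⁱ` lie in `ℓ^{3p}` because
`‖bⁱ‖ ≤ s^{-2/3} s = s^{1/3}`. Since `c` is invertible in the ring of all sequences, both
annihilators in the statement are zero.
-/

open scoped ENNReal

theorem memℓp_geometric {r : ℝ} (hr₀ : 0 ≤ r) (hr₁ : r < 1) {p : ℝ≥0∞} (hp : 0 < p.toReal) :
    Memℓp (fun n : ℕ => r ^ n) p := by
  refine (memℓp_gen_iff hp).2 ?_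
  have hpow : ∀ n : ℕ, ‖r ^ n‖ ^ p.toReal = (r ^ p.toReal) ^ n := fun n => by
    rw [norm_pow, Real.norm_of_nonneg hr₀, ← Real.rpow_natCast, ← Real.rpow_natCast,
      ← Real.rpow_mul hr₀, ← Real.rpow_mul hr₀, mul_comm]
  simp only [hpow]
  exact summable_geometric_of_lt_one (by positivity) (Real.rpow_lt_one hr₀ hr₁ hp)

theorem exists_pos_memℓp_forall_norm_le {ι E : Type*} [Fintype ι] [NormedAddCommGroup E]
    {a : ι → ℕ → E} {p : ℝ≥0∞} (hp : 0 < p.toReal) (ha : ∀ i, Memℓp (a i) p) :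
    ∃ s : ℕ → ℝ, (∀ n, 0 < s n) ∧ Memℓp s p ∧ ∀ i n, ‖a i n‖ ≤ s n := by
  refine ⟨fun n => ∑ i, ‖a i n‖ + (1 / 2 : ℝ) ^ n, fun n => by positivity,
    (Memℓp.finsetSum _ fun i _ => (ha i).norm).add
      (memℓp_geometric (by norm_num) (by norm_num) hp),
    fun i n => ?_⟩
  have hle : ‖a i n‖ ≤ ∑ j, ‖a j n‖ :=
    Finset.single_le_sum (f := fun j => ‖a j n‖) (fun j _ => norm_nonneg _) (Finset.mem_univ i)
  have hpos : (0 : ℝ) < (1 / 2) ^ n := by positivity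
  linarith

theorem Memℓp.of_norm_le_rpow {ι E : Type*} [NormedAddCommGroup E] {f : ι → E} {s : ι → ℝ}
    (hs₀ : ∀ i, 0 ≤ s i) {p : ℝ≥0∞} (hp : 0 < p.toReal) (hs : Memℓp s p) {r : ℝ} (hr : 0 < r)
    (hf : ∀ i, ‖f i‖ ≤ s i ^ r) : Memℓp f (ENNReal.ofReal (p.toReal / r)) := by
  have hpr : 0 < p.toReal / r := div_pos hp hr
  refine (memℓp_gen_iff (by rwa [ENNReal.toReal_ofReal hpr.le])).2 ?_
  rw [ENNReal.toReal_ofReal hpr.le]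
  refine .of_nonneg_of_le (fun i => by positivity) (fun i => ?_) ((memℓp_gen_iff hp).1 hs)
  calc ‖f i‖ ^ (p.toReal / r) ≤ (s i ^ r) ^ (p.toReal / r) :=
        Real.rpow_le_rpow (norm_nonneg _) (hf i) hpr.le
    _ = ‖s i‖ ^ p.toReal := by
        rw [← Real.rpow_mul (hs₀ i), mul_div_cancel₀ _ hr.ne', Real.norm_of_nonneg (hs₀ i)]

theorem memLinfMinus_iff_exists_memℓp {R : Type} [NormedRing R] {α : ℕ → R} :
    MemLinfMinus R α ↔ ∃ p : ℝ≥0∞, 0 < p.toReal ∧ Memℓp α p := by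
  constructor
  · rintro ⟨q, hq, hsum⟩
    refine ⟨ENNReal.ofReal q, by rwa [ENNReal.toReal_ofReal hq.le], memℓp_gen ?_⟩
    rwa [ENNReal.toReal_ofReal hq.le]
  · rintro ⟨p, hp, hα⟩
    exact ⟨p.toReal, hp, (memℓp_gen_iff hp).1 hα⟩

theorem exists_memℓp_of_forall_memLinfMinus {ι R : Type} [Fintype ι] [NormedRing R]
    {a : ι → ℕ → R} (ha : ∀ i, MemLinfMinus R (a i)) :
    ∃ p : ℝ≥0∞, 0 < p.toReal ∧ ∀ i, Memℓp (a i) p := by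
  choose p hp ha using fun i => memLinfMinus_iff_exists_memℓp.1 (ha i)
  have hp_top : ∀ i, p i ≠ ∞ := fun i => ENNReal.toReal_pos_iff.1 (hp i) |>.2.ne
  refine ⟨1 + ∑ i, p i, ENNReal.toReal_pos (by simp) ?_, fun i => (ha i).of_exponent_ge ?_⟩
  · exact ENNReal.add_ne_top.2 ⟨ENNReal.one_ne_top, ENNReal.sum_ne_top.2 fun i _ => hp_top i⟩
  · exact (Finset.single_le_sum (fun j _ => zero_le) (Finset.mem_univ i)).trans le_add_self

theorem algebraMap_cbrt_mul_cbrt_mul_rpow {R : Type*} [Ring R] [Algebra ℝ R] {x : ℝ}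
    (hx : 0 < x) (y : R) :
    algebraMap ℝ R (x ^ (3⁻¹ : ℝ)) * algebraMap ℝ R (x ^ (3⁻¹ : ℝ)) *
      (algebraMap ℝ R (x ^ (-(2 / 3) : ℝ)) * y) = y := by
  have hweights : x ^ (3⁻¹ : ℝ) * x ^ (3⁻¹ : ℝ) * x ^ (-(2 / 3) : ℝ) = 1 := by
    rw [← Real.rpow_add hx, ← Real.rpow_add hx]; norm_num
  rw [← mul_assoc, ← map_mul, ← map_mul, hweights, map_one, one_mul]

theorem norm_algebraMap_rpow_neg_two_thirds_mul_le {R : Type*} [NormedRing R] [NormOneClass R]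
    [NormedAlgebra ℝ R] {x : ℝ} (hx : 0 < x) {y : R} (hy : ‖y‖ ≤ x) :
    ‖algebraMap ℝ R (x ^ (-(2 / 3) : ℝ)) * y‖ ≤ x ^ (3⁻¹ : ℝ) :=
  calc ‖algebraMap ℝ R (x ^ (-(2 / 3) : ℝ)) * y‖ ≤ x ^ (-(2 / 3) : ℝ) * x := by
        refine (norm_mul_le _ _).trans ?_
        rw [norm_algebraMap', Real.norm_of_nonneg (by positivity)]
        gcongr
    _ = x ^ (3⁻¹ : ℝ) := by
        rw [← Real.rpow_add_one hx.ne']; norm_num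

theorem linfMinus_triple_factorization (m : ℕ) (a : Fin m → ℕ → A)
    (ha : ∀ i, MemLinfMinus A (a i)) :
    ∃ (b : Fin m → ℕ → A) (c d : ℕ → A),
      (∀ i, MemLinfMinus A (b i)) ∧ MemLinfMinus A c ∧ MemLinfMinus A d ∧
      (∀ i, a i = c * d * b i) ∧
      (∀ v : ℕ → A, MemLinfMinus A v → (d * v = 0 ↔ c * d * v = 0)) := by
  obtain ⟨p, hp, hap⟩ := exists_memℓp_of_forall_memLinfMinus ha
  obtain ⟨s, hs, hsp, has⟩ := exists_pos_memℓp_forall_norm_le hp hap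
  have hs₀ : ∀ n, 0 ≤ s n := fun n => (hs n).le
  set c : ℕ → A := fun n => algebraMap ℝ A (s n ^ (3⁻¹ : ℝ))
  set b : Fin m → ℕ → A := fun i n => algebraMap ℝ A (s n ^ (-(2 / 3) : ℝ)) * a i n
  have hc_norm : ∀ n, ‖c n‖ ≤ s n ^ (3⁻¹ : ℝ) := fun n => by
    rw [norm_algebraMap', Real.norm_of_nonneg (Real.rpow_nonneg (hs₀ n) _)]
  have hmem {f : ℕ → A} (hf : ∀ n, ‖f n‖ ≤ s n ^ (3⁻¹ : ℝ)) : MemLinfMinus A f :=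
    memLinfMinus_iff_exists_memℓp.2
      ⟨_, by simp [hp], hsp.of_norm_le_rpow hs₀ hp (by norm_num) hf⟩
  have hc_unit : IsUnit c := Pi.isUnit_iff.2 fun n =>
    (IsUnit.mk0 _ (Real.rpow_pos_of_pos (hs n) _).ne').map (algebraMap ℝ A)
  have hb_norm : ∀ i n, ‖b i n‖ ≤ s n ^ (3⁻¹ : ℝ) := fun i n =>
    norm_algebraMap_rpow_neg_two_thirds_mul_le (hs n) (has i n)
  refine ⟨b, c, c, fun i => hmem (hb_norm i), hmem hc_norm, hmem hc_norm,
    fun i => funext fun n => (algebraMap_cbrt_mul_cbrt_mul_rpow (hs n) (a i n)).symm,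
    fun v _ => by rw [mul_assoc]; exact hc_unit.mul_right_eq_zero.symm⟩
end
end
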